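/- Let Γ be a group, K a field, ρ₀ : Γ → GL_n(K) a group homomorphism, and γ₁, …, γ_N ∈ Γ fixed elements. Under the bijection between kernel-conjugacy classes of homomorphisms ρ : Γ → GL_n(K[ε]) lifting ρ₀ and cohomology classes of 1-cocycles α for the adjoint action, the lifts ρ satisfying the condition that ρ(γ_i) is GL_n(K[ε])-conjugate to ρ₀(γ_i) for every i = 1, …, N correspond exactly to the classes of cocycles α such that for each i there exists ξ_i ∈ M_n(K) with α(γ_i) = ξ_i − ρ₀(γ_i)·ξ_i·ρ₀(γ_i)⁻¹ (i.e., the restriction of the class of α to each cyclic subgroup generated by γ_i is trivial). -/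

import Mathlib

/-!
If `u` conjugates `A = ρ₀(γ)` to the lift `(1 + ε a) A`, reducing mod `ε` shows that the
reduction `u₀` of `u` commutes with `A`, so `u u₀⁻¹` is another conjugator, and it reduces to `1`,
i.e. it is `1 + ε ξ`. Since `ε² = 0`, `(1 + ε ξ) A (1 + ε ξ)⁻¹ = A + ε (ξ A - A ξ)`, and comparing
`ε`-parts gives `a A = ξ A - A ξ`, i.e. `a = ξ - A ξ A⁻¹`. Conversely such a `ξ` yields the
conjugator `1 + ε ξ`.
-/

open Matrix DualNumber

/-- The canonical inclusion of matrices over `K` into matrices over `K[ε]`. -/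
noncomputable def inclM (K : Type*) [Field K] (n : ℕ) :
    Matrix (Fin n) (Fin n) K →+* Matrix (Fin n) (Fin n) (DualNumber K) :=
  RingHom.mapMatrix (algebraMap K (DualNumber K))

/-- The canonical inclusion `GL_n(K) → GL_n(K[ε])`. -/
noncomputable def inclGL (K : Type*) [Field K] (n : ℕ) :
    GL (Fin n) K →* GL (Fin n) (DualNumber K) :=
  Units.map (RingHom.mapMatrix (algebraMap K (DualNumber K))).toMonoidHom

theorem Units.eq_sub_mul_mul_inv_iff {S : Type*} [Ring S] (A : Sˣ) (a ξ : S) :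
    a = ξ - A * ξ * ↑A⁻¹ ↔ a * A = ξ * A - A * ξ := by
  rw [← Units.eq_mul_inv_iff_mul_eq, sub_mul, Units.mul_inv_cancel_right]

namespace Matrix.DualNumber

open TrivSqZeroExt

variable {R m : Type*} [CommRing R] [Fintype m]

theorem eps_smul_mul_eps_smul (X Y : Matrix m m (DualNumber R)) :
    ((ε : DualNumber R) • X) * ((ε : DualNumber R) • Y) = 0 := by
  rw [smul_mul_smul_comm, eps_mul_eps, zero_smul]

variable [DecidableEq m]

local notation "ι" => RingHom.mapMatrix (m := m) (algebraMap R (DualNumber R))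
local notation "π" => RingHom.mapMatrix (m := m) (AlgHom.toRingHom (TrivSqZeroExt.fstHom R R R))
local notation "ιGL" => Units.map (RingHom.toMonoidHom ι)
local notation "πGL" => Units.map (RingHom.toMonoidHom π)

theorem reduce_incl (x : Matrix m m R) : π (ι x) = x := by
  ext i j; simp [algebraMap_eq_inl']

theorem reduce_eps_smul (X : Matrix m m (DualNumber R)) : π ((ε : DualNumber R) • X) = 0 := by
  ext i j; simp

theorem eps_smul_incl_injective :
    Function.Injective fun x : Matrix m m R => (ε : DualNumber R) • ι x := by
  intro x y h
  ext i j
  simpa [algebraMap_eq_inl'] using congrArg (fun X => (X i j).snd) h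

theorem eq_eps_smul_incl_of_reduce_eq_zero {X : Matrix m m (DualNumber R)} (h : π X = 0) :
    X = (ε : DualNumber R) • ι (X.map snd) := by
  ext i j
  · simpa using congrArg (· i j) h
  · simp [algebraMap_eq_inl']

def oneAddEps (ξ : Matrix m m R) : GL m (DualNumber R) where
  val := 1 + (ε : DualNumber R) • ι ξ
  inv := 1 - (ε : DualNumber R) • ι ξ
  val_inv := by rw [add_mul, one_mul, mul_sub, mul_one, eps_smul_mul_eps_smul]; abel
  inv_val := by rw [sub_mul, one_mul, mul_add, mul_one, eps_smul_mul_eps_smul]; abel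

theorem reduce_inclGL (g : GL m R) : πGL (ιGL g) = g :=
  Units.ext (reduce_incl _)

theorem reduceGL_eq_of_coe_eq {A : GL m R} {F : GL m (DualNumber R)} {b : Matrix m m R}
    (hF : (F : Matrix m m (DualNumber R)) = ι A + (ε : DualNumber R) • ι b) : πGL F = A :=
  Units.ext ((congrArg π hF).trans (by rw [map_add, reduce_eps_smul, add_zero, reduce_incl]))

theorem coe_oneAddEps_mul_inclGL_mul_inv (ξ : Matrix m m R) (A : GL m R) :
    ((oneAddEps ξ * ιGL A * (oneAddEps ξ)⁻¹ : GL m (DualNumber R)) : Matrix m m (DualNumber R)) =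
      ι A + (ε : DualNumber R) • ι (ξ * A - A * ξ) := by
  change (1 + _) * ι A * (1 - _) = _
  have hξA : (ε : DualNumber R) • ι ξ * ι A = (ε : DualNumber R) • ι (ξ * A) := by
    rw [smul_mul_assoc, map_mul]
  have hAξ : ι A * (ε : DualNumber R) • ι ξ = (ε : DualNumber R) • ι (A * ξ) := by
    rw [mul_smul_comm, map_mul]
  have expand : ∀ x y : Matrix m m (DualNumber R),
      (1 + x) * y * (1 - x) = y + (x * y - y * x) - x * y * x := fun x y => by noncomm_ring
  rw [expand, hξA, hAξ, eps_smul_mul_eps_smul, sub_zero, map_sub, smul_sub]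

theorem exists_eq_oneAddEps_of_reduce_eq_one {v : GL m (DualNumber R)} (hv : πGL v = 1) :
    ∃ ξ, v = oneAddEps ξ := by
  have h := eq_eps_smul_incl_of_reduce_eq_zero (X := (v : Matrix m m (DualNumber R)) - 1)
    (by rw [map_sub, map_one, sub_eq_zero]; exact Units.ext_iff.mp hv)
  exact ⟨_, Units.ext (eq_add_of_sub_eq' h)⟩

theorem exists_conj_inclGL_iff {A : GL m R} {F : GL m (DualNumber R)} {b : Matrix m m R}
    (hF : (F : Matrix m m (DualNumber R)) = ι A + (ε : DualNumber R) • ι b) :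
    (∃ u, F = u * ιGL A * u⁻¹) ↔ ∃ ξ, b = ξ * A - A * ξ := by
  constructor
  · rintro ⟨u, rfl⟩
    have hcomm : Commute (πGL u) A := by
      have hred := reduceGL_eq_of_coe_eq hF
      rw [map_mul, map_mul, map_inv, reduce_inclGL] at hred
      exact mul_inv_eq_iff_eq_mul.mp hred
    have hv : πGL (u * (ιGL (πGL u))⁻¹) = 1 := by
      rw [map_mul, map_inv, reduce_inclGL, mul_inv_cancel]
    have hconj : u * ιGL A * u⁻¹ = u * (ιGL (πGL u))⁻¹ * ιGL A * (u * (ιGL (πGL u))⁻¹)⁻¹ := by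
      nth_rewrite 1 [← (hcomm.map ιGL).inv_left.mul_inv_cancel]
      group
    obtain ⟨ξ, hξ⟩ := exists_eq_oneAddEps_of_reduce_eq_one hv
    refine ⟨ξ, eps_smul_incl_injective (add_left_cancel (a := ι (A : Matrix m m R)) ?_)⟩
    rw [← hF, hconj, hξ, coe_oneAddEps_mul_inclGL_mul_inv]
  · rintro ⟨ξ, rfl⟩
    exact ⟨oneAddEps ξ, Units.ext (hF.trans (coe_oneAddEps_mul_inclGL_mul_inv ξ A).symm)⟩

end Matrix.DualNumber

theorem stmt_6_general (K : Type*) [Field K] (n : ℕ) (Γ : Type*) [Group Γ]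
    (ρ₀ : Γ →* GL (Fin n) K) (N : ℕ) (γs : Fin N → Γ)
    (α : Γ → Matrix (Fin n) (Fin n) K)
    (F : Γ →* GL (Fin n) (DualNumber K))
    (hF : ∀ γ : Γ, (F γ : Matrix (Fin n) (Fin n) (DualNumber K)) =
      (1 + (DualNumber.eps : DualNumber K) • inclM K n (α γ)) *
        inclM K n (ρ₀ γ : Matrix (Fin n) (Fin n) K)) :
    (∀ i : Fin N, ∃ u : GL (Fin n) (DualNumber K),
        F (γs i) = u * inclGL K n (ρ₀ (γs i)) * u⁻¹) ↔
      (∀ i : Fin N, ∃ ξ : Matrix (Fin n) (Fin n) K,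
        α (γs i) = ξ - (ρ₀ (γs i) : Matrix (Fin n) (Fin n) K) * ξ *
          ((ρ₀ (γs i))⁻¹ : Matrix (Fin n) (Fin n) K)) := by
  refine forall_congr' fun i => ?_
  have hFi : (F (γs i) : Matrix (Fin n) (Fin n) (DualNumber K)) =
      inclM K n (ρ₀ (γs i)) + (ε : DualNumber K) • inclM K n (α (γs i) * ρ₀ (γs i)) := by
    rw [hF, add_mul, one_mul, smul_mul_assoc, map_mul]
  simp_rw [← Matrix.coe_units_inv, Units.eq_sub_mul_mul_inv_iff]
  exact DualNumber.exists_conj_inclGL_iff hFi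

/-- let `α` be a 1-cocycle for the adjoint action of `ρ₀`, and let `F` be the
associated lift `ρ_α(γ) = (1 + ε·α(γ))·ρ₀(γ)` of `ρ₀` to `GL_n(K[ε])`.  Given fixed
elements `γ₁, …, γ_N` of `Γ`, the lift `F` satisfies "`F(γᵢ)` is `GL_n(K[ε])`-conjugate to
`ρ₀(γᵢ)` for every `i`" if and only if for each `i` there is `ξᵢ ∈ M_n(K)` with
`α(γᵢ) = ξᵢ − ρ₀(γᵢ)·ξᵢ·ρ₀(γᵢ)⁻¹`, i.e. the restriction of the class of `α` to each cyclic
subgroup `⟨γᵢ⟩` is trivial. -/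
theorem stmt_6 (K : Type*) [Field K] (n : ℕ) (Γ : Type*) [Group Γ]
    (ρ₀ : Γ →* GL (Fin n) K) (N : ℕ) (γs : Fin N → Γ)
    (α : Γ → Matrix (Fin n) (Fin n) K)
    (hα : ∀ γ β : Γ, α (γ * β) =
      α γ + (ρ₀ γ : Matrix (Fin n) (Fin n) K) * α β *
        ((ρ₀ γ)⁻¹ : Matrix (Fin n) (Fin n) K))
    (F : Γ →* GL (Fin n) (DualNumber K))
    (hF : ∀ γ : Γ, (F γ : Matrix (Fin n) (Fin n) (DualNumber K)) =
      (1 + (DualNumber.eps : DualNumber K) • inclM K n (α γ)) *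
        inclM K n (ρ₀ γ : Matrix (Fin n) (Fin n) K)) :
    (∀ i : Fin N, ∃ u : GL (Fin n) (DualNumber K),
        F (γs i) = u * inclGL K n (ρ₀ (γs i)) * u⁻¹) ↔
      (∀ i : Fin N, ∃ ξ : Matrix (Fin n) (Fin n) K,
        α (γs i) = ξ - (ρ₀ (γs i) : Matrix (Fin n) (Fin n) K) * ξ *
          ((ρ₀ (γs i))⁻¹ : Matrix (Fin n) (Fin n) K)) :=
  stmt_6_general K n Γ ρ₀ N γs α F hF
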